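/- Let L ≥ 2 be an integer. Suppose (r,u) follows the weight-normalized gradient flow with time-dependent learning rates (η_r, η_u) = (r(t)², 1), ‖u(0)‖₂ = 1, and the entries of x(t) = (r(t)/‖u(t)‖₂) u(t) strictly positive; set x̃(t) = x(t)^{⊙L}. Let F : ℝ₊^N → ℝ be defined by F(x̃) = (1/2)⟨x̃ ⊙ log(x̃) − x̃, 𝟏⟩ if L = 2 and F(x̃) = (L/(2(2−L)))⟨x̃^{⊙(2/L)}, 𝟏⟩ if L > 2, with Bregman divergence D_F(p,q) = F(p) − F(q) − ⟨∇F(q), p − q⟩. Then for any z ≥ 0 entrywise with Az = b, one has ∂ₜ D_F(z, x̃(t)) = −2L ‖x(t)‖₂² · 𝓛(x(t)) for all t ≥ 0; in particular t ↦ D_F(z, x̃(t)) is nonincreasing. -/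

import Mathlib

/-!
The tangential part of the `u`-gradient is orthogonal to `u`, so `‖u‖₂ = 1` for all time, and
then `x = r u` satisfies `ẋ = -r² ∇𝓛(x) = -‖x‖₂² ∇𝓛(x)`. Differentiating `D_F(z, x̃)` leaves
`-⟨∇²F(x̃) ∂ₜx̃, z - x̃⟩`; since `∇²F(x̃) = diag((1/L) x̃^{⊙(2/L-2)})` and
`∂ₜx̃ = L x^{⊙(L-1)} ⊙ ẋ`, all powers of `x` cancel and this equals
`‖x‖₂² ⟨Aᵀ(A x̃ - b), z - x̃⟩ = -‖x‖₂² ‖A x̃ - b‖₂²` because `A z = b`.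
-/

open Filter Topology

noncomputable section

variable {M N : ℕ}

/-- Entrywise (Hadamard) natural power `x^{⊙L}`. -/
def hadPow (x : Fin N → ℝ) (L : ℕ) : Fin N → ℝ := fun n => x n ^ L

/-- Euclidean (ℓ2) norm of a vector. -/
def eucNorm (u : Fin N → ℝ) : ℝ := Real.sqrt (∑ n, u n ^ 2)

/-- The loss `𝓛(x) = (1/(2L)) ‖A x^{⊙L} − b‖₂²`. -/
def loss (A : Matrix (Fin M) (Fin N) ℝ) (b : Fin M → ℝ) (L : ℕ) (x : Fin N → ℝ) : ℝ :=
  (1 / (2 * (L : ℝ))) * ∑ m, (A.mulVec (hadPow x L) m - b m) ^ 2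

/-- The gradient `∇𝓛(x) = [Aᵀ(A x^{⊙L} − b)] ⊙ x^{⊙(L−1)}`. -/
def gradLoss (A : Matrix (Fin M) (Fin N) ℝ) (b : Fin M → ℝ) (L : ℕ) (x : Fin N → ℝ) :
    Fin N → ℝ :=
  fun n => A.transpose.mulVec (A.mulVec (hadPow x L) - b) n * x n ^ (L - 1)

/-- The weight-normalized vector `x = (r/‖u‖₂) u`. -/
def normVec (r : ℝ) (u : Fin N → ℝ) : Fin N → ℝ := (r / eucNorm u) • u

/-- `∇_r 𝓛̃(r,u) = (uᵀ/‖u‖₂) ∇𝓛((r/‖u‖₂)u)`. -/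
def gradR (A : Matrix (Fin M) (Fin N) ℝ) (b : Fin M → ℝ) (L : ℕ) (r : ℝ)
    (u : Fin N → ℝ) : ℝ :=
  ∑ n, (u n / eucNorm u) * gradLoss A b L (normVec r u) n

/-- `∇_u 𝓛̃(r,u) = (r/‖u‖₂)(I − uuᵀ/‖u‖₂²) ∇𝓛((r/‖u‖₂)u)`. -/
def gradU (A : Matrix (Fin M) (Fin N) ℝ) (b : Fin M → ℝ) (L : ℕ) (r : ℝ)
    (u : Fin N → ℝ) : Fin N → ℝ :=
  fun n => (r / eucNorm u) * (gradLoss A b L (normVec r u) n -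
    (∑ k, u k * gradLoss A b L (normVec r u) k) / eucNorm u ^ 2 * u n)

/-- Weight-normalized gradient flow with (possibly time-dependent) learning rates
`(η_r, η_u)`: `∂ₜ r = −η_r ∇_r 𝓛̃(r,u)`, `∂ₜ u = −η_u ∇_u 𝓛̃(r,u)` for `t ≥ 0`. -/
def WNFlow (A : Matrix (Fin M) (Fin N) ℝ) (b : Fin M → ℝ) (L : ℕ)
    (ηr ηu : ℝ → ℝ) (r : ℝ → ℝ) (u : ℝ → Fin N → ℝ) : Prop :=
  (∀ t, 0 ≤ t → HasDerivAt r (-(ηr t * gradR A b L (r t) (u t))) t) ∧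
  (∀ t, 0 ≤ t → ∀ n, HasDerivAt (fun s => u s n) (-(ηu t * gradU A b L (r t) (u t) n)) t)

/-- Plain gradient flow `∂ₜ x = −∇𝓛(x)` for `t ≥ 0`. -/
def GradFlow (A : Matrix (Fin M) (Fin N) ℝ) (b : Fin M → ℝ) (L : ℕ)
    (x : ℝ → Fin N → ℝ) : Prop :=
  ∀ t, 0 ≤ t → ∀ n, HasDerivAt (fun s => x s n) (-gradLoss A b L (x t) n) t

/-- The set of nonnegative solutions `S₊ = {z ≥ 0 : Az = b}`. -/
def Splus (A : Matrix (Fin M) (Fin N) ℝ) (b : Fin M → ℝ) : Set (Fin N → ℝ) :=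
  {z | (∀ n, 0 ≤ z n) ∧ A.mulVec z = b}

/-- Weighted ℓ1-norm `‖z‖_{w,1} = ‖w ⊙ z‖₁`. -/
def wl1 (w z : Fin N → ℝ) : ℝ := ∑ n, |w n * z n|

/-- The Moore–Penrose conditions characterizing the pseudoinverse `A†`. -/
def IsMoorePenrose (A : Matrix (Fin M) (Fin N) ℝ) (Adag : Matrix (Fin N) (Fin M) ℝ) :
    Prop :=
  A * Adag * A = A ∧ Adag * A * Adag = Adag ∧
    (A * Adag).transpose = A * Adag ∧ (Adag * A).transpose = Adag * A

/-- The potential `F` defining the Bregman divergence. -/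
def breF (L : ℕ) (p : Fin N → ℝ) : ℝ :=
  if L = 2 then (1 / 2) * ∑ n, (p n * Real.log (p n) - p n)
  else ((L : ℝ) / (2 * (2 - (L : ℝ)))) * ∑ n, p n ^ ((2 : ℝ) / (L : ℝ))

/-- The gradient of the potential `F`. -/
def breGradF (L : ℕ) (q : Fin N → ℝ) : Fin N → ℝ :=
  fun n => if L = 2 then (1 / 2) * Real.log (q n)
  else (1 / (2 - (L : ℝ))) * q n ^ ((2 : ℝ) / (L : ℝ) - 1)

/-- Bregman divergence `D_F(p,q) = F(p) − F(q) − ⟨∇F(q), p − q⟩`. -/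
def bregman (L : ℕ) (p q : Fin N → ℝ) : ℝ :=
  breF L p - breF L q - ∑ n, breGradF L q n * (p n - q n)

lemma eucNorm_sq (u : Fin N → ℝ) : eucNorm u ^ 2 = ∑ n, u n ^ 2 :=
  Real.sq_sqrt (by positivity)

lemma eucNorm_smul (c : ℝ) (u : Fin N → ℝ) : eucNorm (c • u) = |c| * eucNorm u := by
  simp only [eucNorm, Pi.smul_apply, smul_eq_mul, mul_pow, ← Finset.mul_sum]
  rw [Real.sqrt_mul (sq_nonneg c), Real.sqrt_sq_eq_abs]

lemma eucNorm_normVec (r : ℝ) {u : Fin N → ℝ} (hu : eucNorm u ≠ 0) :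
    eucNorm (normVec r u) = |r| := by
  rw [normVec, eucNorm_smul, abs_div, abs_of_nonneg (show 0 ≤ eucNorm u from Real.sqrt_nonneg _),
    div_mul_cancel₀ _ hu]

lemma sum_mul_gradU_eq_zero (A : Matrix (Fin M) (Fin N) ℝ) (b : Fin M → ℝ) (L : ℕ) (r : ℝ)
    (u : Fin N → ℝ) : ∑ n, u n * gradU A b L r u n = 0 := by
  by_cases hu : eucNorm u = 0
  · simp [gradU, hu]
  have hsq := eucNorm_sq u
  simp only [gradU]
  generalize gradLoss A b L (normVec r u) = g
  calc ∑ n, u n * (r / eucNorm u * (g n - (∑ k, u k * g k) / eucNorm u ^ 2 * u n))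
      = r / eucNorm u * ((∑ n, u n * g n) -
          (∑ k, u k * g k) / eucNorm u ^ 2 * ∑ n, u n ^ 2) := by
        rw [Finset.mul_sum (f := fun n => u n ^ 2), ← Finset.sum_sub_distrib, Finset.mul_sum]
        exact Finset.sum_congr rfl fun n _ => by ring
    _ = 0 := by rw [← hsq]; field_simp; ring

namespace WNFlow

variable {A : Matrix (Fin M) (Fin N) ℝ} {b : Fin M → ℝ} {L : ℕ} {ηr ηu : ℝ → ℝ} {r : ℝ → ℝ}
  {u : ℝ → Fin N → ℝ}

lemma hasDerivAt_sum_sq (h : WNFlow A b L ηr ηu r u) {t : ℝ} (ht : 0 ≤ t) :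
    HasDerivAt (fun s => ∑ n, u s n ^ 2) 0 t := by
  have hsum := HasDerivAt.fun_sum fun n (_ : n ∈ Finset.univ) => (h.2 t ht n).pow 2
  refine hsum.congr_deriv ?_
  calc ∑ n, ((2 : ℕ) : ℝ) * u t n ^ (2 - 1) * -(ηu t * gradU A b L (r t) (u t) n)
      = -(2 * ηu t) * ∑ n, u t n * gradU A b L (r t) (u t) n := by
        rw [Finset.mul_sum]
        exact Finset.sum_congr rfl fun n _ => by push_cast; ring
    _ = 0 := by rw [sum_mul_gradU_eq_zero, mul_zero]

lemma eucNorm_eq (h : WNFlow A b L ηr ηu r u) {t : ℝ} (ht : 0 ≤ t) :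
    eucNorm (u t) = eucNorm (u 0) := by
  have hd : ∀ s ∈ Set.Ici (0 : ℝ), HasDerivAt (fun s => ∑ n, u s n ^ 2) 0 s :=
    fun s hs => h.hasDerivAt_sum_sq hs
  have := constant_of_has_deriv_right_zero (a := 0) (b := t)
    (fun s hs => (hd s hs.1).continuousAt.continuousWithinAt)
    (fun s hs => (hd s hs.1).hasDerivWithinAt) t ⟨ht, le_rfl⟩
  exact congrArg Real.sqrt this

lemma hasDerivAt_eucNorm (h : WNFlow A b L ηr ηu r u) {t : ℝ} (ht : 0 ≤ t)
    (hu : eucNorm (u t) ≠ 0) : HasDerivAt (fun s => eucNorm (u s)) 0 t := by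
  have hsq : ∑ n, u t n ^ 2 ≠ 0 := by rwa [← eucNorm_sq, pow_ne_zero_iff two_ne_zero]
  exact ((Real.hasDerivAt_sqrt hsq).comp t (h.hasDerivAt_sum_sq ht)).congr_deriv (mul_zero _)

lemma hasDerivAt_normVec (h : WNFlow A b L (fun t => r t ^ 2) (fun _ => 1) r u) {t : ℝ}
    (ht : 0 ≤ t) (hu : eucNorm (u t) = 1) (n : Fin N) :
    HasDerivAt (fun s => normVec (r s) (u s) n)
      (-(r t ^ 2 * gradLoss A b L (normVec (r t) (u t)) n)) t := by
  have hu' : eucNorm (u t) ≠ 0 := by rw [hu]; exact one_ne_zero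
  have hquot := (h.1 t ht).div (h.hasDerivAt_eucNorm ht hu') hu'
  refine (hquot.mul (h.2 t ht n)).congr_deriv ?_
  simp only [gradR, gradU, Pi.div_apply, hu, div_one, one_pow, mul_one, mul_zero, sub_zero,
    one_mul]
  ring

end WNFlow

section Bregman

variable {L : ℕ} {q : ℝ → Fin N → ℝ} {t : ℝ}

lemma two_sub_natCast_ne_zero (hL : L ≠ 2) : (2 : ℝ) - L ≠ 0 :=
  sub_ne_zero.2 (by exact_mod_cast (Ne.symm hL))

lemma hasDerivAt_breGradF (hL : L ≠ 0) {n : Fin N} {q' : ℝ}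
    (hq : HasDerivAt (fun s => q s n) q' t) (hpos : 0 < q t n) :
    HasDerivAt (fun s => breGradF L (q s) n) (1 / L * q t n ^ ((2 : ℝ) / L - 2) * q') t := by
  by_cases h2 : L = 2
  · subst h2
    simp only [breGradF, if_true]
    refine ((hq.log hpos.ne').const_mul (1 / 2 : ℝ)).congr_deriv ?_
    rw [show (2 : ℝ) / ((2 : ℕ) : ℝ) - 2 = -1 by norm_num, Real.rpow_neg_one]
    field_simp
    ring
  · simp only [breGradF, if_neg h2]
    refine ((hq.rpow_const (p := (2 : ℝ) / L - 1) (Or.inl hpos.ne')).const_mul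
      (1 / (2 - (L : ℝ)))).congr_deriv ?_
    have := two_sub_natCast_ne_zero h2
    rw [show (2 : ℝ) / L - 1 - 1 = 2 / L - 2 by ring]
    field_simp

lemma hasDerivAt_breF (hL : L ≠ 0) {q' : Fin N → ℝ}
    (hq : ∀ n, HasDerivAt (fun s => q s n) (q' n) t) (hpos : ∀ n, 0 < q t n) :
    HasDerivAt (fun s => breF L (q s)) (∑ n, breGradF L (q t) n * q' n) t := by
  by_cases h2 : L = 2
  · subst h2
    simp only [breF, breGradF, if_true]
    have hterm (n : Fin N) : HasDerivAt (fun s => q s n * Real.log (q s n) - q s n)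
        (Real.log (q t n) * q' n) t :=
      (((hq n).mul ((hq n).log (hpos n).ne')).sub (hq n)).congr_deriv
        (by field_simp [(hpos n).ne']; ring)
    refine ((HasDerivAt.fun_sum fun n _ => hterm n).const_mul (1 / 2 : ℝ)).congr_deriv ?_
    rw [Finset.mul_sum]
    exact Finset.sum_congr rfl fun n _ => by ring
  · simp only [breF, breGradF, if_neg h2]
    have hterm (n : Fin N) := (hq n).rpow_const (p := (2 : ℝ) / L) (Or.inl (hpos n).ne')
    refine ((HasDerivAt.fun_sum fun n _ => hterm n).const_mul
      ((L : ℝ) / (2 * (2 - L)))).congr_deriv ?_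
    have := two_sub_natCast_ne_zero h2
    rw [Finset.mul_sum]
    exact Finset.sum_congr rfl fun n _ => by field_simp

/-- The terms with `∇F(q)` cancel, leaving the Hessian `∇²F(q) = diag((1/L) q^{⊙(2/L - 2)})`. -/
lemma hasDerivAt_bregman_right (hL : L ≠ 0) (z : Fin N → ℝ) {q' : Fin N → ℝ}
    (hq : ∀ n, HasDerivAt (fun s => q s n) (q' n) t) (hpos : ∀ n, 0 < q t n) :
    HasDerivAt (fun s => bregman L z (q s))
      (-∑ n, 1 / L * q t n ^ ((2 : ℝ) / L - 2) * q' n * (z n - q t n)) t := by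
  have hpair := HasDerivAt.fun_sum fun n (_ : n ∈ Finset.univ) =>
    (hasDerivAt_breGradF hL (hq n) (hpos n)).mul ((hasDerivAt_const t (z n)).sub (hq n))
  refine (((hasDerivAt_const t (breF L z)).sub (hasDerivAt_breF hL hq hpos)).sub
    hpair).congr_deriv ?_
  simp only [Pi.sub_apply, zero_sub, mul_neg, Finset.sum_add_distrib,
    Finset.sum_neg_distrib]
  ring

end Bregman

lemma pow_rpow_mul_pow_pred_mul_pow_pred {L : ℕ} (hL : L ≠ 0) {y : ℝ} (hy : 0 < y) :
    (y ^ L) ^ ((2 : ℝ) / L - 2) * (y ^ (L - 1) * y ^ (L - 1)) = 1 := by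
  rw [← Real.rpow_natCast y L, ← Real.rpow_natCast y (L - 1), Nat.cast_pred (Nat.pos_of_ne_zero hL),
    ← Real.rpow_mul hy.le, ← Real.rpow_add hy, ← Real.rpow_add hy]
  convert Real.rpow_zero y using 2
  field_simp
  ring

lemma sum_transpose_mulVec_mul_sub {A : Matrix (Fin M) (Fin N) ℝ} {b : Fin M → ℝ}
    {z : Fin N → ℝ} (hzb : A.mulVec z = b) (w : Fin N → ℝ) :
    ∑ n, A.transpose.mulVec (A.mulVec w - b) n * (z n - w n) = -∑ m, (A.mulVec w m - b m) ^ 2 := by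
  have h := Matrix.dotProduct_mulVec (A.mulVec w - b) A (z - w)
  rw [← Matrix.mulVec_transpose, Matrix.mulVec_sub, hzb] at h
  simp only [dotProduct, Pi.sub_apply] at h
  rw [← h, ← Finset.sum_neg_distrib]
  exact Finset.sum_congr rfl fun m _ => by ring

lemma loss_nonneg (A : Matrix (Fin M) (Fin N) ℝ) (b : Fin M → ℝ) (L : ℕ)
    (x : Fin N → ℝ) : 0 ≤ loss A b L x := by
  unfold loss
  positivity

lemma hasDerivAt_bregman_hadPow {L : ℕ} (hL : L ≠ 0) {A : Matrix (Fin M) (Fin N) ℝ}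
    {b : Fin M → ℝ} {z : Fin N → ℝ} (hzb : A.mulVec z = b) {x : ℝ → Fin N → ℝ} {c t : ℝ}
    (hx : ∀ n, HasDerivAt (fun s => x s n) (-(c * gradLoss A b L (x t) n)) t)
    (hpos : ∀ n, 0 < x t n) :
    HasDerivAt (fun s => bregman L z (hadPow (x s) L)) (-(2 * L * c * loss A b L (x t))) t := by
  refine (hasDerivAt_bregman_right hL z (fun n => (hx n).fun_pow L)
    (fun n => pow_pos (hpos n) L)).congr_deriv ?_
  have hterm (n : Fin N) :
      1 / L * (x t n ^ L) ^ ((2 : ℝ) / L - 2) *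
          (L * x t n ^ (L - 1) * -(c * gradLoss A b L (x t) n)) * (z n - x t n ^ L) =
        -c * (A.transpose.mulVec (A.mulVec (hadPow (x t) L) - b) n * (z n - hadPow (x t) L n)) := by
    have hcancel := pow_rpow_mul_pow_pred_mul_pow_pred hL (hpos n)
    have hLL : 1 / (L : ℝ) * L = 1 := one_div_mul_cancel (Nat.cast_ne_zero.2 hL)
    simp only [gradLoss, hadPow]
    linear_combination (-(c * A.transpose.mulVec (A.mulVec (hadPow (x t) L) - b) n *
      (z n - x t n ^ L))) * (1 / (L : ℝ) * L * hcancel + hLL)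
  simp only [hterm, ← Finset.mul_sum, sum_transpose_mulVec_mul_sub hzb, loss]
  field_simp

theorem stmt18_general {M N : ℕ} (L : ℕ) (hL : 2 ≤ L)
    (A : Matrix (Fin M) (Fin N) ℝ) (b : Fin M → ℝ)
    (r : ℝ → ℝ) (u : ℝ → Fin N → ℝ)
    (hflow : WNFlow A b L (fun t => r t ^ 2) (fun _ => 1) r u)
    (hnorm : eucNorm (u 0) = 1)
    (x : ℝ → Fin N → ℝ) (hx : ∀ t, x t = normVec (r t) (u t))
    (hpos : ∀ t, 0 ≤ t → ∀ n, 0 < x t n)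
    (z : Fin N → ℝ) (hzb : A.mulVec z = b) :
    (∀ t, 0 ≤ t → HasDerivAt (fun s => bregman L z (hadPow (x s) L))
      (-(2 * (L : ℝ) * eucNorm (x t) ^ 2 * loss A b L (x t))) t) ∧
    (∀ t₁ t₂, 0 ≤ t₁ → t₁ ≤ t₂ →
      bregman L z (hadPow (x t₂) L) ≤ bregman L z (hadPow (x t₁) L)) := by
  obtain rfl : x = fun t => normVec (r t) (u t) := funext hx
  have hu (t : ℝ) (ht : 0 ≤ t) : eucNorm (u t) = 1 := (hflow.eucNorm_eq ht).trans hnorm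
  have hderiv (t : ℝ) (ht : 0 ≤ t) := hasDerivAt_bregman_hadPow (by omega) hzb
    (hflow.hasDerivAt_normVec ht (hu t ht)) (hpos t ht)
  have hnormx (t : ℝ) (ht : 0 ≤ t) : eucNorm (normVec (r t) (u t)) ^ 2 = r t ^ 2 := by
    rw [eucNorm_normVec _ (by rw [hu t ht]; exact one_ne_zero), sq_abs]
  refine ⟨fun t ht => hnormx t ht ▸ hderiv t ht, fun t₁ t₂ ht₁ ht₁₂ => ?_⟩
  have hanti : AntitoneOn (fun s => bregman L z (hadPow (normVec (r s) (u s)) L)) (Set.Ici 0) := by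
    refine antitoneOn_of_deriv_nonpos (convex_Ici 0)
      (fun s hs => (hderiv s hs).continuousAt.continuousWithinAt)
      (fun s hs => (hderiv s (interior_subset hs)).differentiableAt.differentiableWithinAt)
      (fun s hs => ?_)
    rw [(hderiv s (interior_subset hs)).deriv, neg_nonpos]
    exact mul_nonneg (by positivity) (loss_nonneg A b L _)
  exact hanti ht₁ (ht₁.trans ht₁₂) ht₁₂

theorem stmt18 {M N : ℕ} (L : ℕ) (hL : 2 ≤ L)
    (A : Matrix (Fin M) (Fin N) ℝ) (b : Fin M → ℝ)
    (r : ℝ → ℝ) (u : ℝ → Fin N → ℝ)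
    (hflow : WNFlow A b L (fun t => r t ^ 2) (fun _ => 1) r u)
    (hnorm : eucNorm (u 0) = 1)
    (x : ℝ → Fin N → ℝ) (hx : ∀ t, x t = normVec (r t) (u t))
    (hpos : ∀ t, 0 ≤ t → ∀ n, 0 < x t n)
    (z : Fin N → ℝ) (hz : ∀ n, 0 ≤ z n) (hzb : A.mulVec z = b) :
    (∀ t, 0 ≤ t → HasDerivAt (fun s => bregman L z (hadPow (x s) L))
      (-(2 * (L : ℝ) * eucNorm (x t) ^ 2 * loss A b L (x t))) t) ∧
    (∀ t₁ t₂, 0 ≤ t₁ → t₁ ≤ t₂ →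
      bregman L z (hadPow (x t₂) L) ≤ bregman L z (hadPow (x t₁) L)) :=
  stmt18_general L hL A b r u hflow hnorm x hx hpos z hzb

end
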